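/- arXiv:2505.21088 — 2 statements merged into one kernel-verified Lean document; each statement's English description precedes it below -/
import Mathlib

section
/- Suppose each v_i : ℝ → ℝ is differentiable with v_i'(t) = h_i(t) + k(v̄(t) - v_i(t)), where v̄ is the mean of the v_i. Then the variance V(t) = (1/N)Σ_i (v_i(t) - v̄(t))² is differentiable and satisfies V'(t) = -2k V(t) + (2/N) Σ_i (v_i(t) - v̄(t))(h_i(t) - h̄(t)), where h̄ is the mean of the h_i. -/
/-!
The coupling term `k (v̄ - vᵢ)` averages to zero, so `v̄' = h̄`. Differentiating
`V = (1/N) Σ (vᵢ - v̄)²` then gives `(2/N) Σ (vᵢ - v̄)(hᵢ - h̄ + k (v̄ - vᵢ))`,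
and the coupling part of this sum is `-2k V`.
-/

open Finset

section Mean

variable {ι : Type*} [Fintype ι]

theorem sum_mean_sub_eq_zero (x : ι → ℝ) :
    ∑ i, ((1 / (Fintype.card ι : ℝ)) * ∑ j, x j - x i) = 0 := by
  rcases isEmpty_or_nonempty ι with hι | hι
  · simp
  · rw [sum_sub_distrib, sum_const, card_univ, nsmul_eq_mul]
    field_simp
    ring

theorem hasDerivAt_mean_of_consensus {v h : ι → ℝ → ℝ} {k t : ℝ}
    (hv : ∀ i, HasDerivAt (v i)
      (h i t + k * ((1 / (Fintype.card ι : ℝ)) * ∑ j, v j t - v i t)) t) :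
    HasDerivAt (fun s ↦ (1 / (Fintype.card ι : ℝ)) * ∑ i, v i s)
      ((1 / (Fintype.card ι : ℝ)) * ∑ i, h i t) t := by
  refine ((HasDerivAt.fun_sum fun i _ ↦ hv i).const_mul _).congr_deriv ?_
  rw [sum_add_distrib, ← mul_sum, sum_mean_sub_eq_zero]
  ring

theorem hasDerivAt_sum_sub_sq {v : ι → ℝ → ℝ} {v' : ι → ℝ} {m : ℝ → ℝ} {m' t : ℝ}
    (hv : ∀ i, HasDerivAt (v i) (v' i) t) (hm : HasDerivAt m m' t) :
    HasDerivAt (fun s ↦ ∑ i, (v i s - m s) ^ 2) (∑ i, 2 * (v i t - m t) * (v' i - m')) t := by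
  refine HasDerivAt.fun_sum fun i _ ↦ ?_
  refine (((hv i).fun_sub hm).fun_pow 2).congr_deriv ?_
  ring

end Mean

theorem stmt_3_general (N : ℕ) (k : ℝ)
    (v : Fin N → ℝ → ℝ) (h : Fin N → ℝ → ℝ)
    (hv : ∀ i, Differentiable ℝ (v i))
    (vbar : ℝ → ℝ) (hvbar : ∀ t, vbar t = (1 / (N : ℝ)) * ∑ i, v i t)
    (hbar : ℝ → ℝ) (hhbar : ∀ t, hbar t = (1 / (N : ℝ)) * ∑ i, h i t)
    (V : ℝ → ℝ) (hV : ∀ t, V t = (1 / (N : ℝ)) * ∑ i, (v i t - vbar t) ^ 2)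
    (hode : ∀ i, ∀ t : ℝ, deriv (v i) t = h i t + k * (vbar t - v i t)) :
    Differentiable ℝ V ∧
      ∀ t : ℝ, deriv V t =
        -2 * k * V t + (2 / (N : ℝ)) * ∑ i, (v i t - vbar t) * (h i t - hbar t) := by
  have hv' : ∀ i t, HasDerivAt (v i) (h i t + k * (vbar t - v i t)) t :=
    fun i t ↦ (hv i t).hasDerivAt.congr_deriv (hode i t)
  have hvbar' : ∀ t, HasDerivAt vbar (hbar t) t := fun t ↦ by
    have := hasDerivAt_mean_of_consensus (v := v) (h := h) (k := k) (t := t)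
    rw [Fintype.card_fin] at this
    rw [funext hvbar, hhbar]
    exact this fun i ↦ by rw [← hvbar]; exact hv' i t
  have hV' : ∀ t, HasDerivAt V ((1 / (N : ℝ)) *
      ∑ i, 2 * (v i t - vbar t) * (h i t + k * (vbar t - v i t) - hbar t)) t := fun t ↦ by
    rw [funext hV]
    exact (hasDerivAt_sum_sub_sq (hv' · t) (hvbar' t)).const_mul _
  refine ⟨fun t ↦ (hV' t).differentiableAt, fun t ↦ ?_⟩
  rw [(hV' t).deriv, hV t, mul_sum, mul_sum, mul_sum, mul_sum, ← sum_add_distrib]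
  refine sum_congr rfl fun i _ ↦ ?_
  ring

theorem stmt_3 (N : ℕ) (hN : 1 ≤ N) (k : ℝ)
    (v : Fin N → ℝ → ℝ) (h : Fin N → ℝ → ℝ)
    (hv : ∀ i, Differentiable ℝ (v i)) (hh : ∀ i, Continuous (h i))
    (vbar : ℝ → ℝ) (hvbar : ∀ t, vbar t = (1 / (N : ℝ)) * ∑ i, v i t)
    (hbar : ℝ → ℝ) (hhbar : ∀ t, hbar t = (1 / (N : ℝ)) * ∑ i, h i t)
    (V : ℝ → ℝ) (hV : ∀ t, V t = (1 / (N : ℝ)) * ∑ i, (v i t - vbar t) ^ 2)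
    (hode : ∀ i, ∀ t : ℝ, deriv (v i) t = h i t + k * (vbar t - v i t)) :
    Differentiable ℝ V ∧
      ∀ t : ℝ, deriv V t =
        -2 * k * V t + (2 / (N : ℝ)) * ∑ i, (v i t - vbar t) * (h i t - hbar t) :=
  stmt_3_general N k v h hv vbar hvbar hbar hhbar V hV hode
end

section
/- Suppose each v_i satisfies v_i'(t) = h_i(t) + k(v̄(t) - v_i(t)) on [0,T], with |h_i(t)| ≤ M for all i and t. Then the variance V(t) = (1/N)Σ_i (v_i(t) - v̄(t))² satisfies the differential inequality V'(t) ≤ -2k V(t) + 4M √(V(t)) for all t ∈ [0,T]. -/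
/-!
Write `d i = v i - v̄`. Since `∑ i, d i = 0`, the derivative of `v̄` drops out of
`V' = (2/N) ∑ i, d i * (v i' - v̄')`, and the consensus term `k (v̄ - v i) = -k d i` contributes
exactly `-2 k V`. What remains is `(2/N) ∑ i, d i * h i`, which is at most
`2 M (1/N) ∑ i, |d i| ≤ 2 M √V` by Cauchy–Schwarz.
-/

open Finset

section EmpiricalVariance

variable {ι : Type*} [Fintype ι]

noncomputable def empiricalMean (x : ι → ℝ) : ℝ :=
  1 / (Fintype.card ι : ℝ) * ∑ i, x i

noncomputable def empiricalVariance (x : ι → ℝ) : ℝ :=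
  empiricalMean fun i => (x i - empiricalMean x) ^ 2

theorem sum_sub_empiricalMean (x : ι → ℝ) : ∑ i, (x i - empiricalMean x) = 0 := by
  rw [sum_sub_distrib, sum_const, card_univ, nsmul_eq_mul, empiricalMean]
  rcases eq_or_ne (Fintype.card ι : ℝ) 0 with hcard | hcard
  · have : IsEmpty ι := Fintype.card_eq_zero_iff.mp (by exact_mod_cast hcard)
    simp
  · field_simp
    ring

theorem sum_sub_empiricalMean_mul_add (x y : ι → ℝ) (c : ℝ) :
    ∑ i, (x i - empiricalMean x) * (y i + c) = ∑ i, (x i - empiricalMean x) * y i := by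
  simp only [mul_add, sum_add_distrib, ← sum_mul, sum_sub_empiricalMean, zero_mul, add_zero]

theorem empiricalMean_abs_le_sqrt (y : ι → ℝ) :
    empiricalMean (fun i => |y i|) ≤ √(empiricalMean fun i => y i ^ 2) := by
  apply Real.le_sqrt_of_sq_le
  simpa only [empiricalMean, one_div_mul_eq_div, card_univ, sq_abs] using
    sum_div_card_sq_le_sum_sq_div_card (s := univ) (f := fun i => |y i|)

theorem empiricalMean_sub_mul_le (x y : ι → ℝ) {M : ℝ} (hM : 0 ≤ M) (hy : ∀ i, |y i| ≤ M) :
    empiricalMean (fun i => (x i - empiricalMean x) * y i) ≤ M * √(empiricalVariance x) := by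
  calc empiricalMean (fun i => (x i - empiricalMean x) * y i)
      ≤ empiricalMean (fun i => M * |x i - empiricalMean x|) := by
        unfold empiricalMean
        gcongr with i
        calc (x i - empiricalMean x) * y i ≤ |x i - empiricalMean x| * |y i| := by
              rw [← abs_mul]; exact le_abs_self _
          _ ≤ M * |x i - empiricalMean x| := by
              rw [mul_comm]; exact mul_le_mul_of_nonneg_right (hy i) (abs_nonneg _)
    _ = M * empiricalMean (fun i => |x i - empiricalMean x|) := by
        simp only [empiricalMean, ← mul_sum]; ring
    _ ≤ M * √(empiricalVariance x) := by
        gcongr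
        exact empiricalMean_abs_le_sqrt _

theorem hasDerivAt_empiricalVariance {u : ι → ℝ → ℝ} {u' : ι → ℝ} {t : ℝ}
    (hu : ∀ i, HasDerivAt (u i) (u' i) t) :
    HasDerivAt (fun s => empiricalVariance fun i => u i s)
      (2 * empiricalMean fun i => (u i t - empiricalMean fun j => u j t) * u' i) t := by
  have hmean : HasDerivAt (fun s => empiricalMean fun i => u i s) (empiricalMean u') t :=
    (HasDerivAt.fun_sum fun i _ => hu i).const_mul _
  have hsq : HasDerivAt (fun s => empiricalVariance fun i => u i s)
      (1 / (Fintype.card ι : ℝ) * ∑ i, 2 * ((u i t - empiricalMean fun j => u j t) *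
        (u' i + -empiricalMean u'))) t := by
    simpa [empiricalVariance, empiricalMean, mul_assoc, sub_eq_add_neg] using
      (HasDerivAt.fun_sum (u := univ) fun i _ => ((hu i).fun_sub hmean).fun_pow 2).const_mul
        (1 / (Fintype.card ι : ℝ))
  convert hsq using 1
  rw [← mul_sum, sum_sub_empiricalMean_mul_add, empiricalMean]
  ring

end EmpiricalVariance

theorem stmt_7_general (N : ℕ) (k M T : ℝ) (hM : 0 ≤ M)
    (v : Fin N → ℝ → ℝ) (h : Fin N → ℝ → ℝ)
    (hv : ∀ i, Differentiable ℝ (v i))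
    (vbar : ℝ → ℝ) (hvbar : ∀ t, vbar t = (1 / (N : ℝ)) * ∑ i, v i t)
    (V : ℝ → ℝ) (hV : ∀ t, V t = (1 / (N : ℝ)) * ∑ i, (v i t - vbar t) ^ 2)
    (hode : ∀ i, ∀ t ∈ Set.Icc (0 : ℝ) T, deriv (v i) t = h i t + k * (vbar t - v i t))
    (hb : ∀ i, ∀ t ∈ Set.Icc (0 : ℝ) T, |h i t| ≤ M) :
    ∀ t ∈ Set.Icc (0 : ℝ) T,
      deriv V t ≤ -2 * k * V t + 4 * M * Real.sqrt (V t) := by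
  intro t ht
  have hvbar' : vbar = fun s => empiricalMean fun i => v i s :=
    funext fun s => by simp [hvbar, empiricalMean]
  have hV' : V = fun s => empiricalVariance fun i => v i s :=
    funext fun s => by simp [hV, hvbar', empiricalVariance, empiricalMean]
  subst hvbar' hV'
  set x : Fin N → ℝ := fun i => v i t
  have hsplit : (empiricalMean fun i => (x i - empiricalMean x) * deriv (v i) t) =
      (empiricalMean fun i => (x i - empiricalMean x) * h i t) - k * empiricalVariance x := by
    have hterm : ∀ i, (x i - empiricalMean x) * deriv (v i) t =
        (x i - empiricalMean x) * h i t - k * (x i - empiricalMean x) ^ 2 := fun i => by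
      rw [hode i t ht]; ring
    simp only [hterm]
    simp only [empiricalVariance, empiricalMean, sum_sub_distrib, ← mul_sum]
    ring
  have hcov := empiricalMean_sub_mul_le x (fun i => h i t) hM fun i => hb i t ht
  have hsqrt := mul_nonneg hM (Real.sqrt_nonneg (empiricalVariance x))
  rw [(hasDerivAt_empiricalVariance fun i => (hv i t).hasDerivAt).deriv, hsplit]
  linarith

theorem stmt_7 (N : ℕ) (hN : 1 ≤ N) (k M T : ℝ) (hM : 0 ≤ M) (hT : 0 < T)
    (v : Fin N → ℝ → ℝ) (h : Fin N → ℝ → ℝ)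
    (hv : ∀ i, Differentiable ℝ (v i)) (hh : ∀ i, Continuous (h i))
    (vbar : ℝ → ℝ) (hvbar : ∀ t, vbar t = (1 / (N : ℝ)) * ∑ i, v i t)
    (V : ℝ → ℝ) (hV : ∀ t, V t = (1 / (N : ℝ)) * ∑ i, (v i t - vbar t) ^ 2)
    (hode : ∀ i, ∀ t ∈ Set.Icc (0 : ℝ) T, deriv (v i) t = h i t + k * (vbar t - v i t))
    (hb : ∀ i, ∀ t ∈ Set.Icc (0 : ℝ) T, |h i t| ≤ M) :
    ∀ t ∈ Set.Icc (0 : ℝ) T,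
      deriv V t ≤ -2 * k * V t + 4 * M * Real.sqrt (V t) :=
  stmt_7_general N k M T hM v h hv vbar hvbar V hV hode hb
end
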